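/- arXiv:1604.03162 — 2 statements merged into one kernel-verified Lean document; each statement's English description precedes it below -/
import Mathlib

section
/- Let Γ = (X, *, t, I) be a chiral hypertope of rank |I| ≥ 3, and let J ⊆ I with |J| = |I| − 2. Then the J-truncation ^JΓ of Γ is a flag-transitive geometry: ^JΓ is an incidence geometry, and for any two flags of ^JΓ of the same type there is a type-preserving automorphism of ^JΓ mapping one to the other. -/
open Pointwise

/-- An incidence system `(X, *, t, I)`. -/
structure IncidenceSystem (X : Type*) (I : Type*) where
  inc : X → X → Prop
  typ : X → I
  inc_refl : ∀ x, inc x x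
  inc_symm : ∀ x y, inc x y → inc y x
  eq_of_inc_of_typ_eq : ∀ x y, inc x y → typ x = typ y → x = y

namespace IncidenceSystem

variable {X : Type*} {I : Type*} (Γ : IncidenceSystem X I)

/-- A flag is a set of pairwise incident elements. -/
def IsFlag (F : Set X) : Prop := ∀ x ∈ F, ∀ y ∈ F, Γ.inc x y

/-- A chamber is a flag of type `I`. -/
def IsChamber (C : Set X) : Prop := Γ.IsFlag C ∧ Γ.typ '' C = Set.univ

/-- An incidence geometry: every flag is contained in a chamber. -/
def IsGeometry : Prop := ∀ F : Set X, Γ.IsFlag F → ∃ C : Set X, Γ.IsChamber C ∧ F ⊆ C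

/-- The set of elements of the residue of a flag `F`: elements outside `F`
incident to every element of `F`. -/
def res (F : Set X) : Set X := {x : X | x ∉ F ∧ ∀ f ∈ F, Γ.inc x f}

/-- The incidence graph induced on a subset `S` is connected. -/
def ConnectedOn (S : Set X) : Prop :=
  S.Nonempty ∧ ∀ x ∈ S, ∀ y ∈ S,
    Relation.ReflTransGen (fun a b : X => a ∈ S ∧ b ∈ S ∧ a ≠ b ∧ Γ.inc a b) x y

/-- Residual connectedness: the incidence graph of every residue of rank at
least two (including `Γ` itself, the residue of the empty flag) is connected. -/
def ResiduallyConnected : Prop :=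
  ∀ F : Set X, Γ.IsFlag F →
    (∃ i j : I, i ≠ j ∧ i ∉ Γ.typ '' F ∧ j ∉ Γ.typ '' F) →
    Γ.ConnectedOn (Γ.res F)

/-- Thinness: every residue of rank one contains exactly two elements. -/
def Thin : Prop :=
  ∀ F : Set X, Γ.IsFlag F → (∃! i : I, i ∉ Γ.typ '' F) →
    ∃ x y : X, x ≠ y ∧ Γ.res F = {x, y}

/-- Firmness: every residue of rank one contains at least two elements. -/
def Firm : Prop :=
  ∀ F : Set X, Γ.IsFlag F → (∃! i : I, i ∉ Γ.typ '' F) →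
    ∃ x y : X, x ≠ y ∧ x ∈ Γ.res F ∧ y ∈ Γ.res F

/-- Two chambers are `i`-adjacent if they differ exactly in their elements of type `i`. -/
def Adjacent (C C' : Set X) (i : I) : Prop :=
  Γ.IsChamber C ∧ Γ.IsChamber C' ∧ C ≠ C' ∧
    {x ∈ C | Γ.typ x ≠ i} = {x ∈ C' | Γ.typ x ≠ i}

/-- Chamber-connectedness of the residue of the flag `F`: any two chambers
containing `F` are linked by a sequence of successively adjacent chambers
containing `F`. -/
def ChamberConnectedFrom (F : Set X) : Prop :=
  ∀ C C' : Set X, Γ.IsChamber C → Γ.IsChamber C' → F ⊆ C → F ⊆ C' →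
    Relation.ReflTransGen
      (fun A B : Set X => F ⊆ A ∧ F ⊆ B ∧ ∃ i : I, Γ.Adjacent A B i) C C'

/-- Strong chamber-connectedness: every residue of rank at least two
(including `Γ` itself) is chamber-connected. -/
def StronglyChamberConnected : Prop :=
  ∀ F : Set X, Γ.IsFlag F →
    (∃ i j : I, i ≠ j ∧ i ∉ Γ.typ '' F ∧ j ∉ Γ.typ '' F) →
    Γ.ChamberConnectedFrom F

/-- A type-preserving automorphism. -/
def IsAut (φ : Equiv.Perm X) : Prop :=
  (∀ x, Γ.typ (φ x) = Γ.typ x) ∧ ∀ x y, (Γ.inc (φ x) (φ y) ↔ Γ.inc x y)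

/-- The group `Aut_I(Γ)` of type-preserving automorphisms. -/
def autGroup : Subgroup (Equiv.Perm X) where
  carrier := {φ : Equiv.Perm X | Γ.IsAut φ}
  one_mem' := ⟨fun _ => rfl, fun _ _ => Iff.rfl⟩
  mul_mem' := by
    rintro φ ψ ⟨ht, hi⟩ ⟨ht', hi'⟩
    exact ⟨fun x => by rw [Equiv.Perm.mul_apply, ht, ht'],
      fun x y => by rw [Equiv.Perm.mul_apply, Equiv.Perm.mul_apply, hi, hi']⟩
  inv_mem' := by
    rintro φ ⟨ht, hi⟩
    refine ⟨fun x => ?_, fun x y => ?_⟩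
    · conv_rhs => rw [← Equiv.apply_symm_apply φ x]
      rw [ht]
      rfl
    · conv_rhs => rw [← Equiv.apply_symm_apply φ x, ← Equiv.apply_symm_apply φ y]
      exact (hi _ _).symm

/-- Two chambers are in the same orbit under `Aut_I(Γ)`. -/
def InSameOrbit (C C' : Set X) : Prop := ∃ φ ∈ Γ.autGroup, ⇑φ '' C = C'

/-- Flag-transitivity: `Aut_I(Γ)` is transitive on the flags of each type. -/
def FlagTransitive : Prop :=
  ∀ F F' : Set X, Γ.IsFlag F → Γ.IsFlag F' → Γ.typ '' F = Γ.typ '' F' →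
    ∃ φ ∈ Γ.autGroup, ⇑φ '' F = F'

/-- Chamber-transitivity: `Aut_I(Γ)` is transitive on chambers. -/
def ChamberTransitive : Prop :=
  ∀ C C' : Set X, Γ.IsChamber C → Γ.IsChamber C' → ∃ φ ∈ Γ.autGroup, ⇑φ '' C = C'

/-- Chirality: `Aut_I(Γ)` has exactly two orbits on chambers, and adjacent
chambers lie in distinct orbits. -/
def Chiral : Prop :=
  (∃ C₁ C₂ : Set X, Γ.IsChamber C₁ ∧ Γ.IsChamber C₂ ∧ ¬ Γ.InSameOrbit C₁ C₂ ∧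
    ∀ C : Set X, Γ.IsChamber C → Γ.InSameOrbit C C₁ ∨ Γ.InSameOrbit C C₂) ∧
  ∀ (C C' : Set X) (i : I), Γ.Adjacent C C' i → ¬ Γ.InSameOrbit C C'

/-- The `J`-truncation of `Γ`. -/
def truncation (J : Set I) : IncidenceSystem {x : X // Γ.typ x ∈ J} J where
  inc p q := Γ.inc p.1 q.1
  typ p := ⟨Γ.typ p.1, p.2⟩
  inc_refl p := Γ.inc_refl p.1
  inc_symm p q h := Γ.inc_symm _ _ h
  eq_of_inc_of_typ_eq p q h ht :=
    Subtype.ext (Γ.eq_of_inc_of_typ_eq _ _ h (congrArg Subtype.val ht))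

end IncidenceSystem

section CosetGeometry

variable {G : Type*} [Group G] {ι : Type*}

/-- The right coset `H g`. -/
def rcoset (H : Subgroup G) (g : G) : Set G := {x : G | x * g⁻¹ ∈ H}

lemma mem_rcoset_self (H : Subgroup G) (g : G) : g ∈ rcoset H g := by
  show g * g⁻¹ ∈ H
  simp only [mul_inv_cancel]
  exact H.one_mem

lemma rcoset_eq_of_mem {H : Subgroup G} {g x : G} (hx : x ∈ rcoset H g) :
    rcoset H x = rcoset H g := by
  ext y
  simp only [rcoset, Set.mem_setOf_eq] at *
  constructor
  · intro hy
    have h2 := H.mul_mem hy hx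
    have h3 : y * x⁻¹ * (x * g⁻¹) = y * g⁻¹ := by group
    rwa [h3] at h2
  · intro hy
    have h2 := H.mul_mem hy (H.inv_mem hx)
    have h3 : y * g⁻¹ * (x * g⁻¹)⁻¹ = y * x⁻¹ := by group
    rwa [h3] at h2

/-- Elements of the coset geometry `Γ(G; (G_i))`: pairs consisting of a type
`i` and a right coset of `G_i`. -/
def CosetElt (Gi : ι → Subgroup G) : Type _ :=
  { p : ι × Set G // ∃ g : G, p.2 = rcoset (Gi p.1) g }

/-- The coset incidence system `Γ(G; (G_i))` of Tits. -/
def cosetGeometry (Gi : ι → Subgroup G) : IncidenceSystem (CosetElt Gi) ι where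
  inc p q := (p.1.2 ∩ q.1.2).Nonempty
  typ p := p.1.1
  inc_refl := by
    rintro ⟨⟨i, S⟩, g, hg⟩
    dsimp at hg ⊢
    subst hg
    exact ⟨g, mem_rcoset_self _ g, mem_rcoset_self _ g⟩
  inc_symm := by
    rintro p q ⟨x, hx1, hx2⟩
    exact ⟨x, hx2, hx1⟩
  eq_of_inc_of_typ_eq := by
    rintro ⟨⟨i, S⟩, hS⟩ ⟨⟨j, T⟩, hT⟩ hinc hij
    obtain ⟨x, hx1, hx2⟩ := hinc
    dsimp at hij hx1 hx2 hS hT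
    subst hij
    obtain ⟨g, rfl⟩ := hS
    obtain ⟨h, rfl⟩ := hT
    apply Subtype.ext
    dsimp only
    rw [Prod.mk.injEq]
    exact ⟨rfl, by rw [← rcoset_eq_of_mem hx1, rcoset_eq_of_mem hx2]⟩

lemma rcoset_image_mul (H : Subgroup G) (g a : G) :
    (fun x : G => x * a) '' rcoset H g = rcoset H (g * a) := by
  ext y
  simp only [rcoset, Set.mem_image, Set.mem_setOf_eq, mul_inv_rev]
  constructor
  · rintro ⟨x, hx, rfl⟩
    have h3 : x * a * (a⁻¹ * g⁻¹) = x * g⁻¹ := by group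
    rwa [h3]
  · intro hy
    refine ⟨y * a⁻¹, ?_, by group⟩
    have h3 : y * a⁻¹ * g⁻¹ = y * (a⁻¹ * g⁻¹) := by group
    rwa [h3]

/-- Right multiplication by `a` on the coset geometry. -/
def rmul (Gi : ι → Subgroup G) (a : G) (p : CosetElt Gi) : CosetElt Gi :=
  ⟨(p.1.1, (fun x : G => x * a) '' p.1.2), by
    obtain ⟨g, hg⟩ := p.2
    exact ⟨g * a, by rw [hg, rcoset_image_mul]⟩⟩

/-- `G` acts flag-transitively on the coset geometry by right multiplication. -/
def GFlagTransitive (Gi : ι → Subgroup G) : Prop :=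
  ∀ F F' : Set (CosetElt Gi), (cosetGeometry Gi).IsFlag F → (cosetGeometry Gi).IsFlag F' →
    (cosetGeometry Gi).typ '' F = (cosetGeometry Gi).typ '' F' →
    ∃ a : G, rmul Gi a '' F = F'

/-- Only the identity of `G` fixes a chamber of the coset geometry. -/
def GFree (Gi : ι → Subgroup G) : Prop :=
  ∀ (a : G) (C : Set (CosetElt Gi)), (cosetGeometry Gi).IsChamber C →
    rmul Gi a '' C = C → a = 1

end CosetGeometry

/-- `(G, ρ)` is a C-group: the `ρ i` are involutions generating `G` and
satisfying the intersection property. -/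
def IsCGroup {G : Type*} [Group G] {r : ℕ} (ρ : Fin r → G) : Prop :=
  (∀ i, ρ i ≠ 1 ∧ ρ i * ρ i = 1) ∧
  Subgroup.closure (Set.range ρ) = ⊤ ∧
  ∀ K J : Set (Fin r),
    Subgroup.closure (ρ '' K) ⊓ Subgroup.closure (ρ '' J) =
      Subgroup.closure (ρ '' (K ∩ J))

/-- The parabolic subgroup `G⁺_K = ⟨α_i⁻¹ α_j : i, j ∈ K⟩` of a `C⁺`-group. -/
def GplusSub {G : Type*} [Group G] {r : ℕ} (α : Fin r → G) (K : Set (Fin r)) : Subgroup G :=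
  Subgroup.closure {g : G | ∃ i ∈ K, ∃ j ∈ K, g = (α i)⁻¹ * α j}
section AuxProof

variable {X : Type*} {I : Type*} (Γ : IncidenceSystem X I)

lemma aux_mem_autGroup {φ : Equiv.Perm X} (h : φ ∈ Γ.autGroup) : Γ.IsAut φ := h

lemma aux_chamber_exists_typ {C : Set X} (hC : Γ.IsChamber C) (i : I) :
    ∃ x ∈ C, Γ.typ x = i := by
  have : i ∈ Γ.typ '' C := hC.2 ▸ Set.mem_univ i
  obtain ⟨x, hx, hxt⟩ := this
  exact ⟨x, hx, hxt⟩

lemma aux_subset_chamber_eq {C : Set X} (hC : Γ.IsChamber C) {S : Set X} (hS : S ⊆ C) :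
    S = {x ∈ C | Γ.typ x ∈ Γ.typ '' S} := by
  ext x
  constructor
  · intro hx; exact ⟨hS hx, ⟨x, hx, rfl⟩⟩
  · rintro ⟨hxC, s, hsS, hst⟩
    have := Γ.eq_of_inc_of_typ_eq x s (hC.1 x hxC s (hS hsS)) hst.symm
    rwa [this]

lemma aux_map_flag {φ : Equiv.Perm X} (hφ : Γ.IsAut φ)
    {C D A B : Set X} (hC : Γ.IsChamber C) (hD : Γ.IsChamber D)
    (hCD : ⇑φ '' C = D) (hA : A ⊆ C) (hB : B ⊆ D)
    (hAB : Γ.typ '' A = Γ.typ '' B) : ⇑φ '' A = B := by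
  have h1 : ⇑φ '' A ⊆ D := hCD ▸ Set.image_mono hA
  have h2 : Γ.typ '' (⇑φ '' A) = Γ.typ '' A := by
    rw [← Set.image_comp]
    exact Set.image_congr (fun x _ => hφ.1 x)
  rw [aux_subset_chamber_eq Γ hD h1, aux_subset_chamber_eq Γ hD hB, h2, hAB]

lemma aux_orbit_symm {C D : Set X} (h : Γ.InSameOrbit C D) : Γ.InSameOrbit D C := by
  obtain ⟨φ, hφ, hCD⟩ := h
  refine ⟨φ⁻¹, Γ.autGroup.inv_mem hφ, ?_⟩
  rw [← hCD]
  ext x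
  simp [Set.mem_image]

lemma aux_orbit_trans {C D E : Set X} (h1 : Γ.InSameOrbit C D) (h2 : Γ.InSameOrbit D E) :
    Γ.InSameOrbit C E := by
  obtain ⟨φ, hφ, hCD⟩ := h1
  obtain ⟨ψ, hψ, hDE⟩ := h2
  refine ⟨ψ * φ, Γ.autGroup.mul_mem hψ hφ, ?_⟩
  rw [Equiv.Perm.coe_mul, Set.image_comp, hCD, hDE]

lemma aux_flip (hthin : Γ.Thin) {D : Set X} (hD : Γ.IsChamber D) (i : I) :
    ∃ D' : Set X, Γ.IsChamber D' ∧ Γ.Adjacent D D' i ∧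
      {x ∈ D | Γ.typ x ≠ i} ⊆ D' := by
  set F : Set X := {x ∈ D | Γ.typ x ≠ i} with hFdef
  have hFsub : F ⊆ D := fun x hx => hx.1
  have hFflag : Γ.IsFlag F := fun x hx y hy => hD.1 x hx.1 y hy.1
  have htF : ∀ j : I, j ≠ i → j ∈ Γ.typ '' F := by
    intro j hj
    obtain ⟨x, hx, hxt⟩ := aux_chamber_exists_typ Γ hD j
    exact ⟨x, ⟨hx, hxt ▸ hj⟩, hxt⟩
  have hiF : i ∉ Γ.typ '' F := by
    rintro ⟨x, hx, hxt⟩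
    exact hx.2 hxt
  have huniq : ∃! j : I, j ∉ Γ.typ '' F := by
    refine ⟨i, hiF, fun j hj => ?_⟩
    by_contra hji
    exact hj (htF j hji)
  obtain ⟨a, b, hab, hres⟩ := hthin F hFflag huniq
  have hrestyp : ∀ z ∈ Γ.res F, Γ.typ z = i := by
    intro z hz
    by_contra hzi
    obtain ⟨w, hw, hwt⟩ := htF (Γ.typ z) hzi
    exact hz.1 (Γ.eq_of_inc_of_typ_eq z w (hz.2 w hw) hwt.symm ▸ hw)
  obtain ⟨xi, hxiD, hxit⟩ := aux_chamber_exists_typ Γ hD i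
  have hxiF : xi ∉ F := fun h => h.2 hxit
  have hxires : xi ∈ Γ.res F := ⟨hxiF, fun f hf => hD.1 xi hxiD f (hFsub hf)⟩
  -- pick the element of the residue different from xi
  have hares : a ∈ Γ.res F := by rw [hres]; exact Set.mem_insert _ _
  have hbres : b ∈ Γ.res F := by rw [hres]; exact Set.mem_insert_of_mem _ rfl
  have hxiab : xi = a ∨ xi = b := by rw [hres] at hxires; exact hxires
  have hother : ∃ y, y ∈ Γ.res F ∧ y ≠ xi := by
    rcases hxiab with rfl | rfl
    · exact ⟨b, hbres, hab.symm⟩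
    · exact ⟨a, hares, hab⟩
  obtain ⟨y, hyres, hyxi⟩ := hother
  have hyt : Γ.typ y = i := hrestyp y hyres
  refine ⟨insert y F, ⟨?_, ?_⟩, ⟨hD, ?_, ?_, ?_⟩, Set.subset_insert y F⟩
  · -- flag
    intro p hp q hq
    rcases hp with rfl | hp <;> rcases hq with rfl | hq
    · exact Γ.inc_refl _
    · exact hyres.2 q hq
    · exact Γ.inc_symm _ _ (hyres.2 p hp)
    · exact hFflag p hp q hq
  · -- chamber type image
    ext j
    simp only [Set.mem_univ, iff_true]
    by_cases hj : j = i
    · exact ⟨y, Set.mem_insert y F, hj ▸ hyt⟩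
    · obtain ⟨x, hx, hxt⟩ := htF j hj
      exact ⟨x, Set.mem_insert_of_mem _ hx, hxt⟩
  · -- chamber again (for Adjacent)
    constructor
    · intro p hp q hq
      rcases hp with rfl | hp <;> rcases hq with rfl | hq
      · exact Γ.inc_refl _
      · exact hyres.2 q hq
      · exact Γ.inc_symm _ _ (hyres.2 p hp)
      · exact hFflag p hp q hq
    · ext j
      simp only [Set.mem_univ, iff_true]
      by_cases hj : j = i
      · exact ⟨y, Set.mem_insert y F, hj ▸ hyt⟩
      · obtain ⟨x, hx, hxt⟩ := htF j hj
        exact ⟨x, Set.mem_insert_of_mem _ hx, hxt⟩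
  · -- D ≠ insert y F
    intro hDeq
    have : xi ∈ insert y F := hDeq ▸ hxiD
    rcases this with h | h
    · exact hyxi h.symm
    · exact hxiF h
  · -- equal restricted sets
    ext x
    constructor
    · rintro ⟨hx, hxt⟩
      exact ⟨Set.mem_insert_of_mem _ ⟨hx, hxt⟩, hxt⟩
    · rintro ⟨hx, hxt⟩
      rcases hx with rfl | hx
      · exact absurd hyt hxt
      · exact hx

lemma aux_main (hgeo : Γ.IsGeometry) (hthin : Γ.Thin) (hchiral : Γ.Chiral)
    {A B : Set X} (hA : Γ.IsFlag A) (hB : Γ.IsFlag B)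
    (hAB : Γ.typ '' A = Γ.typ '' B) (hmiss : ∃ i, i ∉ Γ.typ '' B) :
    ∃ φ ∈ Γ.autGroup, ⇑φ '' A = B := by
  obtain ⟨C, hC, hAC⟩ := hgeo A hA
  obtain ⟨D, hD, hBD⟩ := hgeo B hB
  obtain ⟨i, hi⟩ := hmiss
  by_cases h : Γ.InSameOrbit C D
  · obtain ⟨φ, hφ, hCD⟩ := h
    exact ⟨φ, hφ, aux_map_flag Γ (aux_mem_autGroup Γ hφ) hC hD hCD hAC hBD hAB⟩
  · obtain ⟨D'', hD'', hadj, hFD''⟩ := aux_flip Γ hthin hD i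
    have hBD'' : B ⊆ D'' := by
      intro b hb
      exact hFD'' ⟨hBD hb, fun hbt => hi ⟨b, hb, hbt⟩⟩
    have hnot : ¬ Γ.InSameOrbit D D'' := hchiral.2 D D'' i hadj
    obtain ⟨C₁, C₂, hC₁, hC₂, h12, horb⟩ := hchiral.1
    have hCorb := horb C hC
    have hDorb := horb D hD
    have hD''orb := horb D'' hD''
    have hCD'' : Γ.InSameOrbit C D'' := by
      rcases hCorb with hC1 | hC2
      · rcases hD''orb with hd1 | hd2
        · exact aux_orbit_trans Γ hC1 (aux_orbit_symm Γ hd1)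
        · exfalso
          rcases hDorb with hD1 | hD2
          · exact h (aux_orbit_trans Γ hC1 (aux_orbit_symm Γ hD1))
          · exact hnot (aux_orbit_trans Γ hD2 (aux_orbit_symm Γ hd2))
      · rcases hD''orb with hd1 | hd2
        · exfalso
          rcases hDorb with hD1 | hD2
          · exact hnot (aux_orbit_trans Γ hD1 (aux_orbit_symm Γ hd1))
          · exact h (aux_orbit_trans Γ hC2 (aux_orbit_symm Γ hD2))
        · exact aux_orbit_trans Γ hC2 (aux_orbit_symm Γ hd2)
    obtain ⟨φ, hφ, hCD⟩ := hCD''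
    exact ⟨φ, hφ, aux_map_flag Γ (aux_mem_autGroup Γ hφ) hC hD'' hCD hAC hBD'' hAB⟩

end AuxProof

/-- Theorem 8.1: rank |I|-2 truncations of a chiral hypertope are flag-transitive geometries. -/
theorem stmt_6 {X : Type*} {I : Type*} (Γ : IncidenceSystem X I)
    (hcard : 3 ≤ Nat.card I)
    (hgeo : Γ.IsGeometry) (hthin : Γ.Thin) (hrc : Γ.ResiduallyConnected)
    (hchiral : Γ.Chiral)
    (J : Set I) (hJ : Nat.card J + 2 = Nat.card I) :
    (Γ.truncation J).IsGeometry ∧ (Γ.truncation J).FlagTransitive := by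
  haveI : Finite I := Nat.finite_of_card_ne_zero (by omega)
  -- there is a type outside J
  have hJc : ∃ i : I, i ∉ J := by
    have h1 : J.ncard + Jᶜ.ncard = Nat.card I := Set.ncard_add_ncard_compl J
    have h2 : Nat.card ↥J = J.ncard := Nat.card_coe_set_eq J
    have h3 : Jᶜ.ncard ≠ 0 := by omega
    have h4 : Jᶜ.Nonempty := Set.nonempty_of_ncard_ne_zero h3
    obtain ⟨i, hi⟩ := h4
    exact ⟨i, hi⟩
  constructor
  · -- geometry
    intro F hF
    have hvF : Γ.IsFlag (Subtype.val '' F) := by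
      rintro x ⟨p, hp, rfl⟩ y ⟨q, hq, rfl⟩
      exact hF p hp q hq
    obtain ⟨C, hC, hFC⟩ := hgeo _ hvF
    refine ⟨{p : {x : X // Γ.typ x ∈ J} | p.1 ∈ C},
      ⟨fun p hp q hq => hC.1 p.1 hp q.1 hq, ?_⟩, fun p hp => hFC ⟨p, hp, rfl⟩⟩
    ext j
    simp only [Set.mem_univ, iff_true]
    obtain ⟨x, hx, hxt⟩ := aux_chamber_exists_typ Γ hC j.1
    exact ⟨⟨x, hxt ▸ j.2⟩, hx, Subtype.ext hxt⟩
  · -- flag-transitivity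
    intro F F' hF hF' htyp
    have hvF : Γ.IsFlag (Subtype.val '' F) := by
      rintro x ⟨p, hp, rfl⟩ y ⟨q, hq, rfl⟩
      exact hF p hp q hq
    have hvF' : Γ.IsFlag (Subtype.val '' F') := by
      rintro x ⟨p, hp, rfl⟩ y ⟨q, hq, rfl⟩
      exact hF' p hp q hq
    have htypv : Γ.typ '' (Subtype.val '' F) = Γ.typ '' (Subtype.val '' F') := by
      have e1 : Γ.typ '' (Subtype.val '' F) =
          Subtype.val '' ((Γ.truncation J).typ '' F) := by
        rw [Set.image_image, Set.image_image]; rfl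
      have e2 : Γ.typ '' (Subtype.val '' F') =
          Subtype.val '' ((Γ.truncation J).typ '' F') := by
        rw [Set.image_image, Set.image_image]; rfl
      rw [e1, e2, htyp]
    have hmiss : ∃ i, i ∉ Γ.typ '' (Subtype.val '' F') := by
      obtain ⟨i, hi⟩ := hJc
      refine ⟨i, ?_⟩
      rintro ⟨x, ⟨p, hp, rfl⟩, hxt⟩
      exact hi (hxt ▸ p.2)
    obtain ⟨φ, hφ, hmap⟩ := aux_main Γ hgeo hthin hchiral hvF hvF' htypv hmiss
    have hIA : Γ.IsAut φ := aux_mem_autGroup Γ hφ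
    refine ⟨φ.subtypeEquiv
      (fun x => (by rw [hIA.1 x] : Γ.typ x ∈ J ↔ Γ.typ (φ x) ∈ J)), ?_, ?_⟩
    · constructor
      · intro p
        exact Subtype.ext (hIA.1 p.1)
      · intro p q
        exact hIA.2 p.1 q.1
    · apply Set.image_injective.mpr (Subtype.val_injective)
      rw [Set.image_image]
      show (fun p : {x : X // Γ.typ x ∈ J} => φ p.1) '' F = Subtype.val '' F'
      rw [← Set.image_image (f := fun p : {x : X // Γ.typ x ∈ J} => p.1) (g := ⇑φ),
        hmap]
end

section
/- Let (G, S) be a C-group of rank r with S = {ρ_0,...,ρ_{r−1}}, and for j = 1,...,r−1 set α_j = ρ_0 ρ_j, R = {α_1,...,α_{r−1}}, and G⁺ = ⟨R⟩. Then R is an independent generating set of G⁺: for every i ∈ {1,...,r−1}, α_i ∉ ⟨α_j : j ∈ {1,...,r−1}, j ≠ i⟩. -/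
open Pointwise

/-- Proposition 6.1: the rotation generators of a C-group are independent. -/
theorem stmt_16 {G : Type*} [Group G] {r : ℕ} [NeZero r] (ρ : Fin r → G)
    (hCgrp : IsCGroup ρ) :
    ∀ i : Fin r, i ≠ 0 →
      ρ 0 * ρ i ∉
        Subgroup.closure {g : G | ∃ j : Fin r, j ≠ 0 ∧ j ≠ i ∧ g = ρ 0 * ρ j} := by
  intro i hi hmem
  obtain ⟨hinv, -, hint⟩ := hCgrp
  set K : Set (Fin r) := {i}ᶜ with hK
  have h0K : (0 : Fin r) ∈ K := fun h => hi (Set.mem_singleton_iff.1 h).symm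
  have hH : Subgroup.closure {g : G | ∃ j : Fin r, j ≠ 0 ∧ j ≠ i ∧ g = ρ 0 * ρ j}
      ≤ Subgroup.closure (ρ '' K) := by
    apply (Subgroup.closure_le _).2
    rintro g ⟨j, hj0, hji, rfl⟩
    exact mul_mem (Subgroup.subset_closure ⟨0, h0K, rfl⟩)
      (Subgroup.subset_closure ⟨j, hji, rfl⟩)
  have h1 : ρ 0 * ρ i ∈ Subgroup.closure (ρ '' K) := hH hmem
  have h0 : ρ 0 ∈ Subgroup.closure (ρ '' K) := Subgroup.subset_closure ⟨0, h0K, rfl⟩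
  have hρi : ρ i ∈ Subgroup.closure (ρ '' K) := by
    have := mul_mem h0 h1
    rwa [← mul_assoc, (hinv 0).2, one_mul] at this
  have hρi2 : ρ i ∈ Subgroup.closure (ρ '' ({i} : Set (Fin r))) :=
    Subgroup.subset_closure ⟨i, rfl, rfl⟩
  have hbot : ρ i ∈ Subgroup.closure (ρ '' (K ∩ {i})) := by
    rw [← hint]
    exact ⟨hρi, hρi2⟩
  rw [hK, Set.compl_inter_self, Set.image_empty, Subgroup.closure_empty,
    Subgroup.mem_bot] at hbot
  exact (hinv i).1 hbot
end
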